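/- Let r : [0,∞) → ℝ be continuous and strictly positive. If r is monotone non-decreasing (respectively non-increasing) on [0,∞), then for every t > 0 the geometric aging intensity satisfies L^G(t) ≥ 1 (respectively L^G(t) ≤ 1) and the harmonic aging intensity satisfies L^H(t) ≥ 1 (respectively L^H(t) ≤ 1). -/

import Mathlib

/-!
Under IFR the integrands `log r u` and `(r u)⁻¹` on `[0, t]` are dominated (respectively
minorised) by their values at `u = t`, so the running mean of `log r` is at most `log r t` and
that of `1 / r` at least `1 / r t`; exponentiating, respectively inverting, gives
`G(t) ≤ r t` and `H(t) ≤ r t`. Under DFR all inequalities reverse.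
-/

open Set Real MeasureTheory intervalIntegral

noncomputable section

def runningMean (f : ℝ → ℝ) (t : ℝ) : ℝ := 1 / t * ∫ u in 0..t, f u

def geometricMeanRate (r : ℝ → ℝ) (t : ℝ) : ℝ := exp (runningMean (fun u => log (r u)) t)

def harmonicMeanRate (r : ℝ → ℝ) (t : ℝ) : ℝ := (runningMean (fun u => (r u)⁻¹) t)⁻¹

end

section RunningMean

variable {f : ℝ → ℝ} {t c : ℝ}

theorem runningMean_le (ht : 0 < t) (hf : IntervalIntegrable f volume 0 t)
    (hfc : ∀ x ∈ Icc 0 t, f x ≤ c) : runningMean f t ≤ c := by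
  have h := integral_mono_on ht.le hf intervalIntegrable_const hfc
  rw [intervalIntegral.integral_const, smul_eq_mul, sub_zero] at h
  rw [runningMean, one_div_mul_eq_div, div_le_iff₀ ht]
  linarith

theorem le_runningMean (ht : 0 < t) (hf : IntervalIntegrable f volume 0 t)
    (hcf : ∀ x ∈ Icc 0 t, c ≤ f x) : c ≤ runningMean f t := by
  have h := integral_mono_on ht.le intervalIntegrable_const hf hcf
  rw [intervalIntegral.integral_const, smul_eq_mul, sub_zero] at h
  rw [runningMean, one_div_mul_eq_div, le_div_iff₀ ht]
  linarith

theorem runningMean_pos (ht : 0 < t) (hf : IntervalIntegrable f volume 0 t)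
    (hpos : ∀ x ∈ Ioo 0 t, 0 < f x) : 0 < runningMean f t :=
  mul_pos (one_div_pos.2 ht) (intervalIntegral_pos_of_pos_on hf hpos ht)

end RunningMean

section MeanRates

variable {r : ℝ → ℝ} {t : ℝ}

theorem intervalIntegrable_log_comp (hc : ContinuousOn r (Ici 0))
    (hpos : ∀ u ∈ Ici (0 : ℝ), 0 < r u) (ht : 0 ≤ t) :
    IntervalIntegrable (fun u => log (r u)) volume 0 t :=
  ((hc.log fun u hu => (hpos u hu).ne').mono Icc_subset_Ici_self).intervalIntegrable_of_Icc ht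

theorem intervalIntegrable_inv_comp (hc : ContinuousOn r (Ici 0))
    (hpos : ∀ u ∈ Ici (0 : ℝ), 0 < r u) (ht : 0 ≤ t) :
    IntervalIntegrable (fun u => (r u)⁻¹) volume 0 t :=
  ((hc.inv₀ fun u hu => (hpos u hu).ne').mono Icc_subset_Ici_self).intervalIntegrable_of_Icc ht

variable (hc : ContinuousOn r (Ici 0)) (hpos : ∀ u ∈ Ici (0 : ℝ), 0 < r u) (ht : 0 < t)
include hc hpos ht

theorem geometricMeanRate_le_of_monotoneOn (hr : MonotoneOn r (Ici 0)) :
    geometricMeanRate r t ≤ r t := by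
  refine (le_log_iff_exp_le (hpos t ht.le)).1 ?_
  refine runningMean_le ht (intervalIntegrable_log_comp hc hpos ht.le) fun x hx => ?_
  exact log_le_log (hpos x hx.1) (hr hx.1 ht.le hx.2)

theorem le_geometricMeanRate_of_antitoneOn (hr : AntitoneOn r (Ici 0)) :
    r t ≤ geometricMeanRate r t := by
  refine (log_le_iff_le_exp (hpos t ht.le)).1 ?_
  refine le_runningMean ht (intervalIntegrable_log_comp hc hpos ht.le) fun x hx => ?_
  exact log_le_log (hpos t ht.le) (hr hx.1 ht.le hx.2)

theorem runningMean_inv_pos : 0 < runningMean (fun u => (r u)⁻¹) t :=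
  runningMean_pos ht (intervalIntegrable_inv_comp hc hpos ht.le)
    fun x hx => inv_pos.2 (hpos x hx.1.le)

theorem harmonicMeanRate_pos : 0 < harmonicMeanRate r t :=
  inv_pos.2 (runningMean_inv_pos hc hpos ht)

theorem harmonicMeanRate_le_of_monotoneOn (hr : MonotoneOn r (Ici 0)) :
    harmonicMeanRate r t ≤ r t := by
  refine inv_le_of_inv_le₀ (hpos t ht.le) ?_
  refine le_runningMean ht (intervalIntegrable_inv_comp hc hpos ht.le) fun x hx => ?_
  exact inv_anti₀ (hpos x hx.1) (hr hx.1 ht.le hx.2)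

theorem le_harmonicMeanRate_of_antitoneOn (hr : AntitoneOn r (Ici 0)) :
    r t ≤ harmonicMeanRate r t := by
  refine le_inv_of_le_inv₀ (runningMean_inv_pos hc hpos ht) ?_
  refine runningMean_le ht (intervalIntegrable_inv_comp hc hpos ht.le) fun x hx => ?_
  exact inv_anti₀ (hpos t ht.le) (hr hx.1 ht.le hx.2)

end MeanRates

theorem IFR_DFR_implies_GAI_HAI_bounds
    (r : ℝ → ℝ) (hc : ContinuousOn r (Set.Ici 0))
    (hpos : ∀ u ∈ Set.Ici (0 : ℝ), 0 < r u) :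
    (MonotoneOn r (Set.Ici 0) →
      ∀ t > (0:ℝ),
        (1:ℝ) ≤ r t / Real.exp ((1 / t) * ∫ u in (0:ℝ)..t, Real.log (r u)) ∧
        (1:ℝ) ≤ r t / ((1 / t) * ∫ u in (0:ℝ)..t, (r u)⁻¹)⁻¹) ∧
    (AntitoneOn r (Set.Ici 0) →
      ∀ t > (0:ℝ),
        r t / Real.exp ((1 / t) * ∫ u in (0:ℝ)..t, Real.log (r u)) ≤ 1 ∧
        r t / ((1 / t) * ∫ u in (0:ℝ)..t, (r u)⁻¹)⁻¹ ≤ 1) := by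
  refine ⟨fun hr t ht => ⟨?_, ?_⟩, fun hr t ht => ⟨?_, ?_⟩⟩
  · exact (one_le_div (exp_pos _)).2 (geometricMeanRate_le_of_monotoneOn hc hpos ht hr)
  · exact (one_le_div (harmonicMeanRate_pos hc hpos ht)).2
      (harmonicMeanRate_le_of_monotoneOn hc hpos ht hr)
  · exact (div_le_one (exp_pos _)).2 (le_geometricMeanRate_of_antitoneOn hc hpos ht hr)
  · exact (div_le_one (harmonicMeanRate_pos hc hpos ht)).2
      (le_harmonicMeanRate_of_antitoneOn hc hpos ht hr)
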